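/- arXiv:2007.07822 — 2 statements merged into one kernel-verified Lean document; each statement's English description precedes it below -/
import Mathlib

section
/- Let K be a field of characteristic 2, q, p ∈ K[x] with q nonzero. The affine curve y^2 + q(x)y = p(x) has a singular point over the algebraic closure of K if and only if gcd(q(x), p'(x)^2 + q'(x)^2·p(x)) ≠ 1. -/
open Polynomial

/-!
In characteristic 2 the condition `2b + q(a) = 0` says `q(a) = 0`, the curve equation then says
`b² = p(a)`, and by the Frobenius identity `(q'(a)b + p'(a))² = p'(a)² + q'(a)²p(a)` the condition
`q'(a)b + p'(a) = 0` says that `a` is a root of `p'² + q'²p`. Since every `p(a)` has a square root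
in a perfect field, singular points exist iff `q` and `p'² + q'²p` have a common root.
-/

section CharTwo

variable {L : Type*} [Field L] [CharP L 2]

theorem sq_mul_add_eq_of_sq_eq {b P P' Q' : L} (hb : b ^ 2 = P) :
    (Q' * b + P') ^ 2 = P' ^ 2 + Q' ^ 2 * P := by
  rw [CharTwo.add_sq, mul_pow, hb, add_comm]

theorem exists_singular_fiber_iff [PerfectRing L 2] (Q P Q' P' : L) :
    (∃ b : L, b ^ 2 + Q * b + P = 0 ∧ Q' * b + P' = 0 ∧ 2 * b + Q = 0) ↔
      Q = 0 ∧ P' ^ 2 + Q' ^ 2 * P = 0 := by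
  constructor
  · rintro ⟨b, hcurve, hx, hy⟩
    have hQ : Q = 0 := by simpa [CharTwo.two_eq_zero] using hy
    have hb : b ^ 2 = P := by
      rw [hQ, zero_mul, add_zero, add_eq_zero_iff_eq_neg, CharTwo.neg_eq] at hcurve
      exact hcurve
    refine ⟨hQ, ?_⟩
    rw [← sq_mul_add_eq_of_sq_eq hb, hx, zero_pow two_ne_zero]
  · rintro ⟨hQ, hdisc⟩
    obtain ⟨b, hb⟩ := surjective_frobenius L 2 P
    rw [frobenius_def] at hb
    refine ⟨b, ?_, ?_, ?_⟩
    · rw [hQ, hb, zero_mul, add_zero, CharTwo.add_self_eq_zero]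
    · rw [← sq_mul_add_eq_of_sq_eq hb] at hdisc
      exact pow_eq_zero_iff two_ne_zero |>.mp hdisc
    · rw [hQ, CharTwo.two_eq_zero, zero_mul, add_zero]

end CharTwo

theorem singular_iff_not_coprime_char2_general {K : Type*} [Field K] [CharP K 2]
    (q p : Polynomial K) :
    (∃ a b : AlgebraicClosure K,
        b ^ 2 + Polynomial.aeval a q * b + Polynomial.aeval a p = 0 ∧
        Polynomial.aeval a (derivative q) * b + Polynomial.aeval a (derivative p) = 0 ∧
        2 * b + Polynomial.aeval a q = 0) ↔
      ¬ IsCoprime q (derivative p ^ 2 + derivative q ^ 2 * p) := by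
  rw [isCoprime_iff_aeval_ne_zero_of_isAlgClosed (k := K) (AlgebraicClosure K)]
  push Not
  simp only [exists_singular_fiber_iff, map_add, map_mul, map_pow]

/-- Let `K` be a field of characteristic 2 and `q, p ∈ K[x]` with `q ≠ 0`.  The affine
curve `y² + q(x)y = p(x)` has a singular point over an algebraic closure of `K`
(simultaneous vanishing of the equation and both partial derivatives, noting
`∂/∂y (y² + qy + p) = 2y + q`) if and only if `gcd(q, p'² + q'²·p) ≠ 1`, i.e. `q` and
`p'² + q'²·p` are not coprime. -/
theorem singular_iff_not_coprime_char2 {K : Type*} [Field K] [CharP K 2]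
    (q p : Polynomial K) (hq : q ≠ 0) :
    (∃ a b : AlgebraicClosure K,
        b ^ 2 + Polynomial.aeval a q * b + Polynomial.aeval a p = 0 ∧
        Polynomial.aeval a (derivative q) * b + Polynomial.aeval a (derivative p) = 0 ∧
        2 * b + Polynomial.aeval a q = 0) ↔
      ¬ IsCoprime q (derivative p ^ 2 + derivative q ^ 2 * p) :=
  singular_iff_not_coprime_char2_general q p
end

section
/- Let q(x) = x(x+1) = x^2 + x and p(x) = Σ_i a_i x^i ∈ F_2[x]. Then gcd(q(x), p'(x)^2 + q'(x)^2 p(x)) = 1 if and only if a_1 ≠ a_0 and Σ_{i=0}^{5} a_{2i} = 1 (where a_i = 0 for i beyond the degree of p). -/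
/-!
Over `F₂` we have `X² + X = X(X - 1)` and `(X² + X)' = 1`, so the gcd is trivial iff
`f = p'² + p` vanishes neither at `0` nor at `1`. Since `a² = a` on `F₂`, `f(a) = p'(a) + p(a)`:
at `0` this is `a₁ + a₀`, and at `1` each odd `aᵢ` occurs twice (in `p(1)` and as `i aᵢ = aᵢ` in
`p'(1)`) and cancels, leaving the sum of the even coefficients.
-/

open Polynomial Finset

theorem Finset.sum_range_two_mul {M : Type*} [AddCommMonoid M] (f : ℕ → M) (n : ℕ) :
    ∑ i ∈ range (2 * n), f i = ∑ i ∈ range n, (f (2 * i) + f (2 * i + 1)) := by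
  induction n with
  | zero => simp
  | succ n ih => rw [Nat.mul_succ, sum_range_succ, sum_range_succ, sum_range_succ, ih, add_assoc]

namespace Polynomial

theorem isCoprime_X_sub_C_iff {K : Type*} [Field K] (a : K) (f : K[X]) :
    IsCoprime (X - C a) f ↔ ¬ f.IsRoot a := by
  rw [(prime_X_sub_C a).coprime_iff_not_dvd, dvd_iff_isRoot]

variable {R : Type*} [CommRing R] [CharP R 2]

theorem derivative_X_sq_add_X_of_charTwo : derivative (X ^ 2 + X : R[X]) = 1 := by
  rw [derivative_add, derivative_X_sq, derivative_X, CharTwo.two_eq_zero, C_0, zero_mul, zero_add]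

theorem eval_one_derivative_add_eval_one_of_charTwo (p : R[X]) {n : ℕ}
    (hn : p.natDegree < 2 * n) :
    (derivative p).eval 1 + p.eval 1 = ∑ i ∈ range n, p.coeff (2 * i) := by
  have hd : (derivative p).natDegree < 2 * n := (natDegree_derivative_le p).trans_lt (by omega)
  rw [eval_eq_sum_range' hd, eval_eq_sum_range' hn, ← sum_add_distrib, sum_range_two_mul]
  refine sum_congr rfl fun i _ => ?_
  simp only [coeff_derivative, one_pow, mul_one]
  push_cast
  linear_combination (i + 1) * (p.coeff (2 * i + 1) + p.coeff (2 * i + 2)) *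
    (CharTwo.two_eq_zero : (2 : R) = 0)

end Polynomial

/-- For `q(x) = x(x+1) = x² + x` over `F₂` and `p = Σ aᵢ xⁱ` of degree at most 10,
`gcd(q, p'² + q'²·p) = 1` iff `a₁ ≠ a₀` and `Σ_{i=0}^{5} a_{2i} = 1`. -/
theorem coprime_criterion_q_eq_X_sq_add_X (p : Polynomial (ZMod 2))
    (hdeg : p.natDegree ≤ 10) :
    IsCoprime (X ^ 2 + X : Polynomial (ZMod 2))
        (derivative p ^ 2 + derivative (X ^ 2 + X : Polynomial (ZMod 2)) ^ 2 * p) ↔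
      (p.coeff 1 ≠ p.coeff 0 ∧ ∑ i ∈ Finset.range 6, p.coeff (2 * i) = 1) := by
  have hfactor : (X ^ 2 + X : (ZMod 2)[X]) = (X - C 0) * (X - C 1) := by
    rw [map_zero, map_one, sub_zero, CharTwo.sub_eq_add]
    ring
  have heval (a : ZMod 2) :
      (derivative p ^ 2 + p).eval a = (derivative p).eval a + p.eval a := by
    rw [eval_add, eval_pow, ZMod.pow_card]
  have hcoeff : (derivative p).coeff 0 = p.coeff 1 := by simp [coeff_derivative]
  have hzero_iff (a : ZMod 2) : ¬ a = 0 ↔ a = 1 := by revert a; decide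
  rw [derivative_X_sq_add_X_of_charTwo, one_pow, one_mul, hfactor, IsCoprime.mul_left_iff,
    isCoprime_X_sub_C_iff, isCoprime_X_sub_C_iff, IsRoot.def, IsRoot.def, heval, heval,
    eval_one_derivative_add_eval_one_of_charTwo p (n := 6) (by omega), ← coeff_zero_eq_eval_zero,
    ← coeff_zero_eq_eval_zero, hcoeff, CharTwo.add_eq_zero, hzero_iff]
end
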